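/- arXiv:2006.13673 — 6 statements merged into one kernel-verified Lean document; each statement's English description precedes it below -/
import Mathlib

section
/- For every string S ∈ Σ^n \ H_{n,k}, there exists a finite set Δ ⊆ P(S) such that the intervals R_{S,i} for i ∈ Δ are pairwise disjoint and P(S) ⊆ ∪_{i∈Δ} R_{S,i}; in particular, Σ_{i∈Δ} |R_{S,i}| ≥ |P(S)|. -/
open Finset
open scoped Classical

noncomputable section

variable {α : Type*}

/-- `i ↻ n`: 1-indexed wrap-around of an (integer) position. -/
def zwrap (n : ℕ) (i : ℤ) : ℕ := ((i - 1) % (n : ℤ)).toNat + 1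

/-- `S*[i]`: the infinite cyclic extension of the length-`n` string `S` (1-indexed). -/
def cext (n : ℕ) (S : ℕ → α) (i : ℕ) : α := S ((i - 1) % n + 1)

/-- The fragment `S*[a..]`, i.e. the string `w` with `w[j] = S*[a+j-1]`. -/
def frag (n : ℕ) (S : ℕ → α) (a : ℕ) : ℕ → α := fun j => cext n S (a + j - 1)

/-- Hamming distance restricted to positions `[a..b]` (1-indexed strings). -/
def hamIcc (a b : ℕ) (S T : ℕ → α) : ℕ := ((Finset.Icc a b).filter fun j => S j ≠ T j).card

/-- Hamming distance between two length-`n` strings. -/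
def ham (n : ℕ) (S T : ℕ → α) : ℕ := hamIcc 1 n S T

/-- `p` is a period of the length-`L` string `w` (1-indexed). -/
def IsPeriod (L : ℕ) (w : ℕ → α) (p : ℕ) : Prop :=
  1 ≤ p ∧ ∀ j, 1 ≤ j → j + p ≤ L → w j = w (j + p)

/-- `per(w)`: the shortest period of the length-`L` string `w`. -/
def per (L : ℕ) (w : ℕ → α) : ℕ := sInf {p | IsPeriod L w p}

/-- `root(S)`: the length of the primitive root of the length-`n` string `S`,
i.e. the least length of a string `Q` with `S = Q^α`. -/
def root (n : ℕ) (S : ℕ → α) : ℕ := sInf {r | r ∣ n ∧ IsPeriod n S r}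

/-- `S` is `(a,b)`-pseudo-periodic: it has an `(a,b)`-base. -/
def PseudoPeriodic (n : ℕ) (a b : ℝ) (S : ℕ → α) : Prop :=
  ∃ S' : ℕ → α, (root n S' : ℝ) ≤ (n : ℝ) / a ∧ (ham n S S' : ℝ) ≤ b

/-- `cyc(S)`: left cyclic rotation, `cyc(S)[i] = S*[i+1]`. -/
def cyc (n : ℕ) (S : ℕ → α) : ℕ → α := fun i => cext n S (i + 1)

/-- `cyc^m(S)` for an integer `m`: `cyc^m(S)[i] = S*[i+m]` (cyclically). -/
def cycZ (n : ℕ) (m : ℤ) (S : ℕ → α) : ℕ → α := fun i => S (zwrap n ((i : ℤ) + m))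

/-- `rot_n(P) = {(i-1) ↻ n : i ∈ P}`. -/
def rotSet (n : ℕ) (P : Finset ℕ) : Finset ℕ := P.image fun i => zwrap n ((i : ℤ) - 1)

/-- `ρ_{S,i} = per(S*[i..i+3ℓ-1])`. -/
def rho (n ℓ : ℕ) (S : ℕ → α) (i : ℕ) : ℕ := per (3 * ℓ) (frag n S i)

/-- `μ_{S,i}*`: the infinite periodic extension of `μ_{S,i} = S*[i..i+ρ_{S,i}-1]` (1-indexed). -/
def muExt (n ℓ : ℕ) (S : ℕ → α) (i : ℕ) : ℕ → α :=
  fun j => cext n S (i + (j - 1) % rho n ℓ S i)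

/-- `P(S)`: the set of cubic positions of `S`. -/
def cubicSet (n ℓ : ℕ) (S : ℕ → α) : Finset ℕ :=
  (Finset.Icc 1 n).filter fun i => rho n ℓ S i ≤ ℓ

/-- The defining set of `τ_{S,i}`:
`{τ ≥ 1 : τ < (n/(γk))·Ham(S*[i..i+τ-1], μ_{S,i}*[1..τ])}`. -/
def tauSet (n ℓ k : ℕ) (γ : ℝ) (S : ℕ → α) (i : ℕ) : Set ℕ :=
  {τ | 1 ≤ τ ∧ (τ : ℝ) < (n : ℝ) / (γ * k) * (hamIcc 1 τ (frag n S i) (muExt n ℓ S i) : ℝ)}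

/-- `τ_{S,i}`. -/
def tau (n ℓ k : ℕ) (γ : ℝ) (S : ℕ → α) (i : ℕ) : ℕ := sInf (tauSet n ℓ k γ S i)

/-- `R_{S,i} = [i..i+τ_{S,i}-1]`. -/
def Rset (n ℓ k : ℕ) (γ : ℝ) (S : ℕ → α) (i : ℕ) : Finset ℕ :=
  Finset.Icc i (i + tau n ℓ k γ S i - 1)

/-- `M_{S,i} = {j ∈ R_{S,i} : S*[j] ≠ μ_{S,i}*[j-i+1]}`. -/
def Mset (n ℓ k : ℕ) (γ : ℝ) (S : ℕ → α) (i : ℕ) : Finset ℕ :=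
  (Rset n ℓ k γ S i).filter fun j => cext n S j ≠ muExt n ℓ S i (j - i + 1)

/-- `A_{S,i} = {j ∈ R_{S,i} : [j..j+2ℓ-1] ⊆ R_{S,i} \ M_{S,i}}`. -/
def Aset (n ℓ k : ℕ) (γ : ℝ) (S : ℕ → α) (i : ℕ) : Finset ℕ :=
  (Rset n ℓ k γ S i).filter fun j =>
    Finset.Icc j (j + 2 * ℓ - 1) ⊆ Rset n ℓ k γ S i \ Mset n ℓ k γ S i

/-- `f_c(S) = ∪_{i ∈ P(S)} {j ↻ n : j ∈ M_{S,i}}`. -/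
def fc (n ℓ k : ℕ) (γ : ℝ) (S : ℕ → α) : Finset ℕ :=
  (cubicSet n ℓ S).biUnion fun i => (Mset n ℓ k γ S i).image fun j => zwrap n (j : ℤ)


/-! The content is that `τ_{S,i}` exists for every cubic position `i`. Otherwise every prefix of
`S*[i..]` disagrees with `μ_{S,i}*` in at most a `1/(3ℓ)` fraction of its positions. As `S*` has
period `n` and `μ_{S,i}*` has period `ρ_{S,i} ≤ ℓ`, a defect `μ_{S,i}*[x + n] ≠ μ_{S,i}*[x]` would
recur at `x + tρ_{S,i}` for every `t` and produce mismatches of density `1/(2ρ_{S,i})`; so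
`μ_{S,i}*` has period `n`, hence period `gcd(ρ_{S,i}, n) ≤ ℓ`, and read from the right offset it
is a `(3γk, γk)`-base of `S`. With every `R_{S,i}` nonempty, choosing intervals greedily from the
left gives `Δ`. -/

open Function Nat

theorem Function.Periodic.nat_gcd {g : ℕ → α} {m n : ℕ} (hm : Periodic g m) (hn : Periodic g n) :
    Periodic g (m.gcd n) := by
  induction m, n using Nat.gcd.induction with
  | H0 n => simpa using hn
  | H1 m n _ ih =>
    rw [Nat.gcd_rec]
    refine ih (fun x => ?_) hm
    calc g (x + n % m) = g (x + n % m + n / m * m) := (hm.nat_mul _ _).symm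
      _ = g (x + n) := by rw [add_assoc, Nat.mod_add_div']
      _ = g x := hn x

theorem Function.Periodic.count_add_const {p : ℕ → Prop} [DecidablePred p] {n : ℕ}
    (hp : Periodic p n) (m : ℕ) : count (fun k => p (k + m)) n = count p n := by
  induction m with
  | zero => rfl
  | succ m ih =>
    have h := (count_succ (fun k => p (k + m)) n).symm.trans (count_succ' _ n)
    have hpn : p (n + m) = p m := by simpa using hp.add_const m 0
    simp only [zero_add, hpn, add_assoc, add_comm 1 m] at h
    rw [← ih]
    exact (Nat.add_right_cancel h).symm

theorem Function.Periodic.of_sparse_mismatch {f g : ℕ → α} {n ρ c : ℕ} (hf : Periodic f n)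
    (hg : Periodic g ρ) (hρ : 0 < ρ) (hc : 2 * ρ < c)
    (hsparse : ∀ b, c * count (fun j => f j ≠ g j) b ≤ b) : Periodic g n := by
  intro x
  by_contra hx
  set T := 2 * (x + n) + 1 with hT
  set N := x + n + T * ρ with hN
  have hstep : ∀ t, f (x + t * ρ) ≠ g (x + t * ρ) ∨ f (x + n + t * ρ) ≠ g (x + n + t * ρ) := by
    intro t
    by_contra! h
    refine hx ?_
    calc g (x + n) = g (x + n + t * ρ) := (hg.nat_mul t _).symm
      _ = f (x + n + t * ρ) := h.2.symm
      _ = f (x + t * ρ) := by rw [add_right_comm]; exact hf _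
      _ = g (x + t * ρ) := h.1
      _ = g x := hg.nat_mul t x
  have hcount : ∀ a ≤ x + n,
      #{t ∈ range T | f (a + t * ρ) ≠ g (a + t * ρ)} ≤ count (fun j => f j ≠ g j) N := by
    intro a ha
    rw [count_eq_card_filter_range]
    refine card_le_card_of_injOn (fun t => a + t * ρ) (fun t ht => ?_) (fun s _ t _ h => ?_)
    · simp only [coe_filter, mem_range, Set.mem_ofPred_eq] at ht ⊢
      refine ⟨?_, ht.2⟩
      have := Nat.mul_lt_mul_of_pos_right ht.1 hρ
      omega
    · simpa [hρ.ne'] using h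
  have hTcount : T ≤ 2 * count (fun j => f j ≠ g j) N := by
    calc T = #(range T) := (card_range T).symm
      _ ≤ #{t ∈ range T | f (x + t * ρ) ≠ g (x + t * ρ)}
          + #{t ∈ range T | f (x + n + t * ρ) ≠ g (x + n + t * ρ)} := by
        refine (card_le_card fun t ht => ?_).trans (card_union_le _ _)
        rw [mem_union, mem_filter, mem_filter]
        exact (hstep t).imp (⟨ht, ·⟩) (⟨ht, ·⟩)
      _ ≤ 2 * count (fun j => f j ≠ g j) N := by
        linarith [hcount x (by omega), hcount (x + n) le_rfl]
  have hc' : (2 * ρ + 1) * T ≤ c * T := Nat.mul_le_mul_right T hc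
  have := Nat.mul_le_mul_left c hTcount
  nlinarith [hsparse N]

theorem hamIcc_one_eq_count (b : ℕ) (w u : ℕ → α) :
    hamIcc 1 b w u = count (fun j => w (j + 1) ≠ u (j + 1)) b := by
  rw [hamIcc, count_eq_card_filter_range]
  refine card_nbij' (· - 1) (· + 1) (fun j hj => ?_) (fun j hj => ?_) (fun j hj => ?_)
    (fun j _ => rfl)
  all_goals simp only [coe_filter, mem_Icc, mem_range, Set.mem_ofPred_eq] at hj ⊢
  · obtain ⟨⟨h1, h2⟩, h⟩ := hj
    refine ⟨by omega, ?_⟩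
    rwa [Nat.sub_add_cancel h1]
  · exact ⟨⟨by omega, by omega⟩, hj.2⟩
  · omega

theorem one_le_per (L : ℕ) (w : ℕ → α) : 1 ≤ per L w :=
  (Nat.sInf_mem (s := {p | IsPeriod L w p}) ⟨L + 1, by omega, fun _ _ _ => by omega⟩).1

theorem root_le_of_periodic {n d : ℕ} {w : ℕ → α} (hw : Periodic w d) (hd : 0 < d)
    (hdn : d ∣ n) : root n w ≤ d :=
  Nat.sInf_le ⟨hdn, hd, fun j _ _ => (hw j).symm⟩

-- Fragments are read 0-indexed from here on: with truncated subtraction, `frag n S i` itself is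
-- not `n`-periodic at position `0` when `i = 1`.
theorem periodic_frag_succ (n : ℕ) (S : ℕ → α) {i : ℕ} (hi : 1 ≤ i) :
    Periodic (fun j => frag n S i (j + 1)) n := fun j => by
  simp only [frag, cext]
  rw [show i + (j + n + 1) - 1 - 1 = i + (j + 1) - 1 - 1 + n by omega, Nat.add_mod_right]

theorem periodic_muExt_succ (n ℓ : ℕ) (S : ℕ → α) (i : ℕ) :
    Periodic (fun j => muExt n ℓ S i (j + 1)) (rho n ℓ S i) := fun j => by
  simp only [muExt, Nat.add_sub_cancel, Nat.add_mod_right]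

theorem ham_eq_count_frag {n i : ℕ} (S : ℕ → α) (hi : 1 ≤ i) (hin : i ≤ n) {g : ℕ → α}
    (hg : Periodic g n) :
    ham n S (fun p => g (p + (n - i))) = count (fun j => frag n S i (j + 1) ≠ g j) n := by
  have hD : Periodic (fun j => frag n S i (j + 1) ≠ g j) n := fun j => by
    simp only [periodic_frag_succ n S hi j, hg j]
  rw [ham, hamIcc_one_eq_count, ← hD.count_add_const (n - i + 1), count_eq_card_filter_range,
    count_eq_card_filter_range]
  refine congrArg card (filter_congr fun j hj => ?_)
  have hS : S (j + 1) = frag n S i (j + (n - i + 1) + 1) := by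
    simp only [frag, cext]
    rw [show i + (j + (n - i + 1) + 1) - 1 - 1 = j + n by omega, Nat.add_mod_right,
      Nat.mod_eq_of_lt (mem_range.1 hj)]
  rw [hS, show j + 1 + (n - i) = j + (n - i + 1) by omega]

theorem tauSet_nonempty {n k ℓ : ℕ} {γ : ℝ} (hn : (n : ℝ) = 3 * γ * k * ℓ) {S : ℕ → α}
    (hS : ¬ PseudoPeriodic n (3 * γ * k) (γ * k) S) {i : ℕ} (hi : i ∈ cubicSet n ℓ S) :
    (tauSet n ℓ k γ S i).Nonempty := by
  obtain ⟨⟨hi1, hin⟩, hρℓ⟩ : (1 ≤ i ∧ i ≤ n) ∧ rho n ℓ S i ≤ ℓ := by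
    simpa [cubicSet] using hi
  have hρ : 0 < rho n ℓ S i := one_le_per _ _
  have hℓ : (0 : ℝ) < ℓ := by exact_mod_cast hρ.trans_le hρℓ
  have hγk : 0 < γ * k := by
    by_contra! h
    have : (n : ℝ) ≤ 0 := by rw [hn]; nlinarith
    have : (1 : ℝ) ≤ n := by exact_mod_cast hi1.trans hin
    linarith
  set f := fun j => frag n S i (j + 1)
  set g := fun j => muExt n ℓ S i (j + 1)
  by_contra hempty
  have hsparse : ∀ b, 3 * ℓ * count (fun j => f j ≠ g j) b ≤ b := by
    intro b
    rcases b.eq_zero_or_pos with rfl | hb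
    · simp
    have hb' : b ∉ tauSet n ℓ k γ S i := fun h => hempty ⟨b, h⟩
    simp only [tauSet, Set.mem_ofPred_eq, not_and, not_lt, hamIcc_one_eq_count] at hb'
    have hscale : (n : ℝ) / (γ * k) = 3 * ℓ := by rw [div_eq_iff hγk.ne', hn]; ring
    exact_mod_cast hscale ▸ hb' hb
  have hgn : Periodic g n :=
    (periodic_frag_succ n S hi1).of_sparse_mismatch (periodic_muExt_succ n ℓ S i) hρ
      (by omega) hsparse
  have hgd := (periodic_muExt_succ n ℓ S i).nat_gcd hgn
  apply hS
  refine ⟨fun p => g (p + (n - i)), ?_, ?_⟩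
  · have hroot := root_le_of_periodic (hgd.add_const (n - i)) (Nat.gcd_pos_of_pos_left _ hρ)
      (Nat.gcd_dvd_right _ _)
    have hgcd := Nat.le_of_dvd hρ (Nat.gcd_dvd_left (rho n ℓ S i) n)
    have h3γk : (3 * γ * k : ℝ) ≠ 0 := by rw [mul_assoc]; exact (mul_pos three_pos hγk).ne'
    rw [show (n : ℝ) / (3 * γ * k) = ℓ by rw [div_eq_iff h3γk, hn]; ring]
    exact_mod_cast hroot.trans (hgcd.trans hρℓ)
  · rw [ham_eq_count_frag S hi1 hin hgn]
    have : (3 * ℓ * count (fun j => f j ≠ g j) n : ℝ) ≤ n := by exact_mod_cast hsparse n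
    rw [hn] at this
    nlinarith

theorem one_le_tau {n k ℓ : ℕ} {γ : ℝ} (hn : (n : ℝ) = 3 * γ * k * ℓ) {S : ℕ → α}
    (hS : ¬ PseudoPeriodic n (3 * γ * k) (γ * k) S) {i : ℕ} (hi : i ∈ cubicSet n ℓ S) :
    1 ≤ tau n ℓ k γ S i :=
  (Nat.sInf_mem (tauSet_nonempty hn hS hi)).1

theorem Finset.exists_pairwiseDisjoint_Icc_cover (P : Finset ℕ) (e : ℕ → ℕ)
    (he : ∀ i ∈ P, i ≤ e i) :
    ∃ Δ ⊆ P, (Δ : Set ℕ).PairwiseDisjoint (fun i => Icc i (e i)) ∧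
      P ⊆ Δ.biUnion fun i => Icc i (e i) := by
  induction P using Finset.strongInduction with
  | H P ih =>
    rcases P.eq_empty_or_nonempty with rfl | hne
    · exact ⟨∅, empty_subset _, by simp, empty_subset _⟩
    set m := P.min' hne
    have hmP : m ∈ P := P.min'_mem hne
    have hsub : {j ∈ P | e m < j} ⊂ P :=
      (filter_ssubset).2 ⟨m, hmP, by simpa using he m hmP⟩
    obtain ⟨Δ, hΔ, hdisj, hcover⟩ := ih _ hsub fun j hj => he j (mem_filter.1 hj).1
    refine ⟨insert m Δ, insert_subset hmP (hΔ.trans hsub.subset), ?_, fun j hj => ?_⟩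
    · rw [coe_insert]
      refine hdisj.insert fun j hj _ => disjoint_left.2 fun x hxm hxj => ?_
      have := (mem_filter.1 (hΔ hj)).2
      simp only [mem_Icc] at hxm hxj
      omega
    · rw [biUnion_insert, mem_union]
      by_cases hjm : j ≤ e m
      · exact Or.inl (mem_Icc.2 ⟨P.min'_le j hj, hjm⟩)
      · exact Or.inr (hcover (mem_filter.2 ⟨hj, not_le.1 hjm⟩))

theorem stmt2_general {α : Type*} (n k ℓ : ℕ) (γ : ℝ)
    (hn : (n : ℝ) = 3 * γ * k * ℓ)
    (S : ℕ → α) (hS : ¬ PseudoPeriodic n (3 * γ * k) (γ * k) S) :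
    ∃ Δ : Finset ℕ, Δ ⊆ cubicSet n ℓ S ∧
      (∀ i ∈ Δ, ∀ i' ∈ Δ, i ≠ i' → Disjoint (Rset n ℓ k γ S i) (Rset n ℓ k γ S i')) ∧
      cubicSet n ℓ S ⊆ Δ.biUnion (fun i => Rset n ℓ k γ S i) ∧
      (cubicSet n ℓ S).card ≤ ∑ i ∈ Δ, (Rset n ℓ k γ S i).card := by
  have hτ (i) (hi : i ∈ cubicSet n ℓ S) : i ≤ i + tau n ℓ k γ S i - 1 := by
    have := one_le_tau hn hS hi
    omega
  obtain ⟨Δ, hΔ, hdisj, hcover⟩ := (cubicSet n ℓ S).exists_pairwiseDisjoint_Icc_cover _ hτ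
  exact ⟨Δ, hΔ, fun i hi i' hi' hne => hdisj hi hi' hne, hcover,
    (card_le_card hcover).trans card_biUnion_le⟩

/-- For every `S ∈ Σ^n \ H_{n,k}`, there exists `Δ ⊆ P(S)` with pairwise-disjoint
`R_{S,i}` covering `P(S)`; in particular `Σ_{i∈Δ} |R_{S,i}| ≥ |P(S)|`. -/
theorem stmt2 {α : Type*} (n k ℓ : ℕ) (γ : ℝ)
    (hk1 : 1 ≤ k) (hkn : k ≤ n) (hγ : 14 ≤ γ) (hℓ1 : 1 ≤ ℓ)
    (hn : (n : ℝ) = 3 * γ * k * ℓ)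
    (S : ℕ → α) (hS : ¬ PseudoPeriodic n (3 * γ * k) (γ * k) S) :
    ∃ Δ : Finset ℕ, Δ ⊆ cubicSet n ℓ S ∧
      (∀ i ∈ Δ, ∀ i' ∈ Δ, i ≠ i' → Disjoint (Rset n ℓ k γ S i) (Rset n ℓ k γ S i')) ∧
      cubicSet n ℓ S ⊆ Δ.biUnion (fun i => Rset n ℓ k γ S i) ∧
      (cubicSet n ℓ S).card ≤ ∑ i ∈ Δ, (Rset n ℓ k γ S i).card :=
  stmt2_general n k ℓ γ hn S hS
end
end

section
/- Let S ∈ Σ^n \ H_{n,k} and let i, i' ∈ P(S) with i < i'. If A_{S,i} ∩ A_{S,i'} ≠ ∅, then M_{S,i'} ⊆ M_{S,i}. -/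
open Finset
open scoped Classical

noncomputable section

variable {α : Type*}

/-! ### Auxiliary lemmas for `stmt7` -/

lemma rho_pos (n ℓ : ℕ) (hℓ : 1 ≤ ℓ) (S : ℕ → α) (i : ℕ) : 1 ≤ rho n ℓ S i := by
  have hmem : IsPeriod (3 * ℓ) (frag n S i) (3 * ℓ) :=
    ⟨by omega, fun j hj hle => absurd hle (by omega)⟩
  have hne : {p | IsPeriod (3 * ℓ) (frag n S i) p}.Nonempty := ⟨3 * ℓ, hmem⟩
  exact (Nat.sInf_mem hne).1

lemma muExt_period (n ℓ : ℕ) (S : ℕ → α) (i u : ℕ) (hu : 1 ≤ u) :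
    muExt n ℓ S i (u + rho n ℓ S i) = muExt n ℓ S i u := by
  unfold muExt
  congr 2
  rw [show u + rho n ℓ S i - 1 = (u - 1) + rho n ℓ S i by omega, Nat.add_mod_right]

lemma aux_per_iter {H : ℕ → α} {p : ℕ}
    (hH : ∀ v, 1 ≤ v → H (v + p) = H v) :
    ∀ m v, 1 ≤ v → H (v + m * p) = H v := by
  intro m
  induction m with
  | zero => simp
  | succ m ih =>
    intro v hv
    have h1 := hH (v + m * p) (by omega)
    rw [show v + (m + 1) * p = v + m * p + p by ring, h1, ih v hv]

/-- Infinite Fine–Wilf: two globally periodic sequences (periods `p`, `q`) that agree on a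
window of length `L ≥ p + q` agree everywhere. -/
lemma aux_finewilf {H G : ℕ → α} {p q a L : ℕ}
    (hp : 1 ≤ p) (hq : 1 ≤ q) (ha : 1 ≤ a) (hL : p + q ≤ L)
    (hH : ∀ v, 1 ≤ v → H (v + p) = H v)
    (hG : ∀ v, 1 ≤ v → G (v + q) = G v)
    (hagree : ∀ v, a ≤ v → v ≤ a + L - 1 → H v = G v) :
    ∀ v, 1 ≤ v → H v = G v := by
  have part1 : ∀ v, a ≤ v → H v = G v := by
    intro v
    induction v using Nat.strong_induction_on with
    | _ v ih =>
      intro hav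
      by_cases hsmall : v ≤ a + p + q - 1
      · exact hagree v hav (by omega)
      · have hv : a + p + q ≤ v := by omega
        have e1 : H v = H (v - p) := by
          have h := hH (v - p) (by omega)
          rw [show v - p + p = v by omega] at h
          exact h
        have e2 : H (v - p) = G (v - p) := ih (v - p) (by omega) (by omega)
        have e3 : G (v - p) = G (v - p - q) := by
          have h := hG (v - p - q) (by omega)
          rw [show v - p - q + q = v - p by omega] at h
          exact h
        have f1 : G v = G (v - q) := by
          have h := hG (v - q) (by omega)
          rw [show v - q + q = v by omega] at h
          exact h
        have f2 : H (v - q) = G (v - q) := ih (v - q) (by omega) (by omega)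
        have f3 : H (v - q) = H (v - q - p) := by
          have h := hH (v - q - p) (by omega)
          rw [show v - q - p + p = v - q by omega] at h
          exact h
        have f4 : H (v - q - p) = G (v - q - p) := ih (v - q - p) (by omega) (by omega)
        rw [e1, e2, e3, f1, ← f2, f3, f4, show v - p - q = v - q - p by omega]
  intro v hv
  have h1 : H v = H (v + (q * a) * p) := (aux_per_iter hH (q * a) v hv).symm
  have h2 : G v = G (v + (p * a) * q) := (aux_per_iter hG (p * a) v hv).symm
  have heq : v + (q * a) * p = v + (p * a) * q := by ring
  have hge : a ≤ v + (q * a) * p := by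
    have h1 : a * 1 ≤ (q * a) * p := by
      calc a * 1 = 1 * a * 1 := by ring
        _ ≤ q * a * p := Nat.mul_le_mul (Nat.mul_le_mul hq le_rfl) hp
    omega
  rw [h1, h2, ← heq, part1 _ hge]

lemma tau_mem {n ℓ k : ℕ} {γ : ℝ} {S : ℕ → α} {i : ℕ}
    (h : 1 ≤ tau n ℓ k γ S i) : tau n ℓ k γ S i ∈ tauSet n ℓ k γ S i := by
  by_cases hne : (tauSet n ℓ k γ S i).Nonempty
  · exact Nat.sInf_mem hne
  · exfalso
    rw [Set.not_nonempty_iff_eq_empty] at hne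
    rw [tau, hne, Nat.sInf_empty] at h
    omega

lemma tau_min {n ℓ k : ℕ} {γ : ℝ} {S : ℕ → α} {i t : ℕ}
    (h1 : 1 ≤ t) (h2 : t < tau n ℓ k γ S i) :
    (n : ℝ) / (γ * k) * (hamIcc 1 t (frag n S i) (muExt n ℓ S i) : ℝ) ≤ t := by
  have hnm : t ∉ tauSet n ℓ k γ S i := Nat.notMem_of_lt_sInf h2
  rw [tauSet, Set.mem_setOf_eq, not_and] at hnm
  exact le_of_not_gt (hnm h1)

lemma hamIcc_split (d τ : ℕ) (h1 : d ≤ τ) (S T : ℕ → α) :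
    hamIcc 1 τ S T = hamIcc 1 d S T + hamIcc (d + 1) τ S T := by
  unfold hamIcc
  have hun : Finset.Icc 1 τ = Finset.Icc 1 d ∪ Finset.Icc (d + 1) τ := by
    ext x
    simp only [Finset.mem_Icc, Finset.mem_union]
    omega
  have hdisj : Disjoint ((Finset.Icc 1 d).filter fun j => S j ≠ T j)
      ((Finset.Icc (d + 1) τ).filter fun j => S j ≠ T j) := by
    apply Finset.disjoint_left.mpr
    intro x hx hx'
    simp only [Finset.mem_filter, Finset.mem_Icc] at hx hx'
    omega
  rw [hun, Finset.filter_union, Finset.card_union_of_disjoint hdisj]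

lemma hamIcc_shift (d t : ℕ) (F M F' M' : ℕ → α)
    (hF : ∀ v, 1 ≤ v → v ≤ t → F (v + d) = F' v)
    (hM : ∀ v, 1 ≤ v → v ≤ t → M (v + d) = M' v) :
    hamIcc (d + 1) (d + t) F M = hamIcc 1 t F' M' := by
  unfold hamIcc
  apply Finset.card_bij (fun b _ => b - d)
  · intro b hb
    simp only [Finset.mem_filter, Finset.mem_Icc] at hb ⊢
    obtain ⟨⟨h1, h2⟩, h3⟩ := hb
    refine ⟨⟨by omega, by omega⟩, ?_⟩
    rw [← hF (b - d) (by omega) (by omega), ← hM (b - d) (by omega) (by omega),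
        show b - d + d = b by omega]
    exact h3
  · intro b1 h1 b2 h2 he
    simp only [Finset.mem_filter, Finset.mem_Icc] at h1 h2
    omega
  · intro v hv
    simp only [Finset.mem_filter, Finset.mem_Icc] at hv
    exact ⟨v + d, by
      simp only [Finset.mem_filter, Finset.mem_Icc]
      exact ⟨⟨by omega, by omega⟩, by
        rw [hF v hv.1.1 hv.1.2, hM v hv.1.1 hv.1.2]; exact hv.2⟩, by omega⟩

/-- If `i < i'` are cubic positions of `S ∈ Σ^n \ H_{n,k}` with `A_{S,i} ∩ A_{S,i'} ≠ ∅`,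
then `M_{S,i'} ⊆ M_{S,i}`. -/
theorem stmt7 {α : Type*} (n k ℓ : ℕ) (γ : ℝ)
    (hk1 : 1 ≤ k) (hkn : k ≤ n) (hγ : 14 ≤ γ) (hℓ1 : 1 ≤ ℓ)
    (hn : (n : ℝ) = 3 * γ * k * ℓ)
    (S : ℕ → α) (hS : ¬ PseudoPeriodic n (3 * γ * k) (γ * k) S)
    (i i' : ℕ) (hi : i ∈ cubicSet n ℓ S) (hi' : i' ∈ cubicSet n ℓ S) (hlt : i < i')
    (hA : (Aset n ℓ k γ S i ∩ Aset n ℓ k γ S i').Nonempty) :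
    Mset n ℓ k γ S i' ⊆ Mset n ℓ k γ S i := by
  classical
  obtain ⟨j, hj⟩ := hA
  rw [Finset.mem_inter] at hj
  obtain ⟨hjA, hjA'⟩ := hj
  rw [Aset, Finset.mem_filter] at hjA hjA'
  obtain ⟨hjR, hsub⟩ := hjA
  obtain ⟨hjR', hsub'⟩ := hjA'
  -- basic facts about positions and periods
  have hi1 : 1 ≤ i := (Finset.mem_Icc.mp (Finset.mem_filter.mp hi).1).1
  have hi'1 : 1 ≤ i' := (Finset.mem_Icc.mp (Finset.mem_filter.mp hi').1).1
  have hρi : rho n ℓ S i ≤ ℓ := (Finset.mem_filter.mp hi).2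
  have hρi' : rho n ℓ S i' ≤ ℓ := (Finset.mem_filter.mp hi').2
  have hρi1 : 1 ≤ rho n ℓ S i := rho_pos n ℓ hℓ1 S i
  have hρi'1 : 1 ≤ rho n ℓ S i' := rho_pos n ℓ hℓ1 S i'
  have hjRm := Finset.mem_Icc.mp hjR
  have hjRm' := Finset.mem_Icc.mp hjR'
  have hτ1 : 1 ≤ tau n ℓ k γ S i := by omega
  have hτ'1 : 1 ≤ tau n ℓ k γ S i' := by omega
  set d := i' - i with hd
  -- pointwise matching on the common window
  have hmatch : ∀ b, j ≤ b → b ≤ j + 2 * ℓ - 1 →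
      cext n S b = muExt n ℓ S i (b - i + 1) := by
    intro b h1 h2
    have hb := hsub (Finset.mem_Icc.mpr ⟨h1, h2⟩)
    rw [Finset.mem_sdiff] at hb
    obtain ⟨hbR, hbM⟩ := hb
    rw [Mset, Finset.mem_filter, not_and] at hbM
    exact not_not.mp (hbM hbR)
  have hmatch' : ∀ b, j ≤ b → b ≤ j + 2 * ℓ - 1 →
      cext n S b = muExt n ℓ S i' (b - i' + 1) := by
    intro b h1 h2
    have hb := hsub' (Finset.mem_Icc.mpr ⟨h1, h2⟩)
    rw [Finset.mem_sdiff] at hb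
    obtain ⟨hbR, hbM⟩ := hb
    rw [Mset, Finset.mem_filter, not_and] at hbM
    exact not_not.mp (hbM hbR)
  -- the window is inside both R-sets
  have hwin : j + 2 * ℓ - 1 ≤ i + tau n ℓ k γ S i - 1 := by
    have hb := hsub (Finset.mem_Icc.mpr ⟨(by omega : j ≤ j + 2 * ℓ - 1), le_rfl⟩)
    rw [Finset.mem_sdiff] at hb
    exact (Finset.mem_Icc.mp hb.1).2
  -- Claim 1: the two periodic extensions agree (Fine–Wilf)
  have claim1 : ∀ v, 1 ≤ v → muExt n ℓ S i (v + d) = muExt n ℓ S i' v := by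
    apply aux_finewilf (p := rho n ℓ S i) (q := rho n ℓ S i')
      (a := j - i' + 1) (L := 2 * ℓ) hρi1 hρi'1 (by omega) (by omega)
    · intro v hv
      show muExt n ℓ S i (v + rho n ℓ S i + d) = muExt n ℓ S i (v + d)
      rw [show v + rho n ℓ S i + d = (v + d) + rho n ℓ S i by ring]
      exact muExt_period n ℓ S i (v + d) (by omega)
    · intro v hv
      exact muExt_period n ℓ S i' v hv
    · intro v h1 h2
      have hii' : i' ≤ j := hjRm'.1
      set b := i' + v - 1 with hb
      have hbj : j ≤ b := by omega
      have hbj2 : b ≤ j + 2 * ℓ - 1 := by omega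
      have e1 := hmatch b hbj hbj2
      have e2 := hmatch' b hbj hbj2
      have e3 : b - i + 1 = v + d := by omega
      have e4 : b - i' + 1 = v := by omega
      rw [e3] at e1
      rw [e4] at e2
      rw [← e1, ← e2]
  -- Claim 2: R_{S,i'} ⊆ R_{S,i}
  have hend : i' + tau n ℓ k γ S i' ≤ i + tau n ℓ k γ S i := by
    by_contra hcon
    push_neg at hcon
    have hd1 : 1 ≤ d := by omega
    have hdτ : d < tau n ℓ k γ S i := by omega
    set t := tau n ℓ k γ S i - d with ht
    have ht1 : 1 ≤ t := by omega
    have htτ' : t < tau n ℓ k γ S i' := by omega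
    have hmin1 := tau_min (S := S) (i := i) hd1 hdτ
    have hmin2 := tau_min (S := S) (i := i') ht1 htτ'
    have hττ := (tau_mem (S := S) (i := i) hτ1).2
    -- split the mismatches
    have hsplit := hamIcc_split d (tau n ℓ k γ S i) (by omega)
      (frag n S i) (muExt n ℓ S i)
    have hshift : hamIcc (d + 1) (tau n ℓ k γ S i) (frag n S i) (muExt n ℓ S i)
        = hamIcc 1 t (frag n S i') (muExt n ℓ S i') := by
      rw [show tau n ℓ k γ S i = d + t by omega]
      apply hamIcc_shift
      · intro v hv1 hv2
        show cext n S (i + (v + d) - 1) = cext n S (i' + v - 1)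
        congr 1
        omega
      · intro v hv1 hv2
        exact claim1 v hv1
    rw [hsplit, hshift] at hττ
    have hγk : (0 : ℝ) < γ * k := by
      have : (1 : ℝ) ≤ (k : ℝ) := by exact_mod_cast hk1
      nlinarith
    have hc : (0 : ℝ) ≤ (n : ℝ) / (γ * k) := by positivity
    have hcast : ((hamIcc 1 d (frag n S i) (muExt n ℓ S i)
        + hamIcc 1 t (frag n S i') (muExt n ℓ S i') : ℕ) : ℝ)
        = (hamIcc 1 d (frag n S i) (muExt n ℓ S i) : ℝ)
        + (hamIcc 1 t (frag n S i') (muExt n ℓ S i') : ℝ) := by push_cast; ring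
    rw [hcast, mul_add] at hττ
    have hdt : (d : ℝ) + (t : ℝ) = (tau n ℓ k γ S i : ℝ) := by
      have : d + t = tau n ℓ k γ S i := by omega
      exact_mod_cast congrArg (Nat.cast : ℕ → ℝ) this
    linarith
  -- conclude
  intro m hm
  rw [Mset, Finset.mem_filter] at hm ⊢
  obtain ⟨hmR, hmne⟩ := hm
  have hmIcc := Finset.mem_Icc.mp hmR
  constructor
  · rw [Rset, Finset.mem_Icc]
    omega
  · have hcl := claim1 (m - i' + 1) (by omega)
    rw [show m - i' + 1 + d = m - i + 1 by omega] at hcl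
    rw [hcl]
    exact hmne
end
end

section
/- For every string S ∈ Σ^n \ H_{n,k} (note that then also cyc(S) ∈ Σ^n \ H_{n,k}), it holds that f_c(cyc(S)) = rot_n(f_c(S)). -/
open Finset
open scoped Classical

noncomputable section

variable {α : Type*}

/-!
Everything that `f_c` records at a position `i` — the period `ρ`, the extension `μ*`, the length
`τ` and the mismatches, read as offsets from `i` — is a function of the suffix `S*[i..]` alone.
Since `cyc(S)*[i..] = S*[i+1..]` and `S*[i+n..] = S*[i..]`, the positions contributed by
`cyc(S)` at `i` are those contributed by `S` at `i + 1`, moved back by one; as `i` runs over a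
full period, so does `i + 1`.
-/

theorem zwrap_congr {n : ℕ} {a b : ℤ} (h : a ≡ b [ZMOD n]) : zwrap n a = zwrap n b := by
  unfold zwrap
  rw [Int.ModEq.sub_right 1 h]

theorem zwrap_modEq {n : ℕ} (hn : 0 < n) (a : ℤ) : (zwrap n a : ℤ) ≡ a [ZMOD n] := by
  have hmod : 0 ≤ (a - 1) % (n : ℤ) := Int.emod_nonneg _ (by omega)
  have hcast : (zwrap n a : ℤ) = (a - 1) % n + 1 := by
    simp only [zwrap, Nat.cast_add, Int.toNat_of_nonneg hmod, Nat.cast_one]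
  rw [hcast]
  simpa using (Int.mod_modEq (a - 1) n).add_right 1

theorem Finset.biUnion_Icc_one_comp_succ {β : Type*} [DecidableEq β] {n : ℕ}
    {g : ℕ → Finset β} (hg : g (n + 1) = g 1) :
    (Icc 1 n).biUnion (fun i => g (i + 1)) = (Icc 1 n).biUnion g := by
  ext x
  simp only [mem_biUnion, mem_Icc]
  constructor
  · rintro ⟨i, hi, hx⟩
    rcases eq_or_lt_of_le hi.2 with rfl | hlt
    · exact ⟨1, ⟨le_rfl, hi.1⟩, hg ▸ hx⟩
    · exact ⟨i + 1, by omega, hx⟩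
  · rintro ⟨i, hi, hx⟩
    rcases eq_or_lt_of_le hi.1 with rfl | hlt
    · exact ⟨n, ⟨hi.2, le_rfl⟩, hg.symm ▸ hx⟩
    · exact ⟨i - 1, by omega, by rwa [Nat.sub_add_cancel hi.1]⟩

-- `rotSet` elaborates to an image of the coercion of `P` into `Finset ℤ`.
theorem rotSet_eq_image (n : ℕ) (P : Finset ℕ) :
    rotSet n P = P.image fun i : ℕ => zwrap n ((i : ℤ) - 1) := by
  ext x
  simp [rotSet]

theorem isPeriod_congr {L p : ℕ} {w w' : ℕ → α} (h : ∀ j, 1 ≤ j → j ≤ L → w j = w' j) :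
    IsPeriod L w p ↔ IsPeriod L w' p := by
  unfold IsPeriod
  constructor <;> rintro ⟨hp, hw⟩ <;> refine ⟨hp, fun j hj hjp => ?_⟩
  · rw [← h j hj (by omega), ← h (j + p) (by omega) hjp]; exact hw j hj hjp
  · rw [h j hj (by omega), h (j + p) (by omega) hjp]; exact hw j hj hjp

theorem per_congr {L : ℕ} {w w' : ℕ → α} (h : ∀ j, 1 ≤ j → j ≤ L → w j = w' j) :
    per L w = per L w' := by
  unfold per
  simp_rw [isPeriod_congr h]

section Shift

variable {n : ℕ} {S : ℕ → α} {i j : ℕ}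

theorem frag_cyc (hi : 1 ≤ i) (hj : 1 ≤ j) : frag n (cyc n S) i j = frag n S (i + 1) j := by
  simp only [frag, cext, cyc]
  congr 1
  rw [show (i + j - 1 - 1) % n + 1 + 1 - 1 = (i + j - 1 - 1) % n + 1 by omega, Nat.mod_add_mod]
  congr 2
  omega

theorem frag_add_self (hi : 1 ≤ i) (hj : 1 ≤ j) : frag n S (i + n) j = frag n S i j := by
  simp only [frag, cext]
  rw [show i + n + j - 1 - 1 = (i + j - 1 - 1) + n by omega, Nat.add_mod_right]

end Shift

section LocalData

variable {n ℓ k : ℕ} {γ : ℝ} {S T : ℕ → α} {i i' : ℕ}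

def mismatchOffsets (n ℓ k : ℕ) (γ : ℝ) (S : ℕ → α) (i : ℕ) : Finset ℕ :=
  (Finset.range (tau n ℓ k γ S i)).filter fun d => frag n S i (d + 1) ≠ muExt n ℓ S i (d + 1)

theorem Mset_eq_image (hi : 1 ≤ i) :
    Mset n ℓ k γ S i = (mismatchOffsets n ℓ k γ S i).image (i + ·) := by
  ext j
  unfold mismatchOffsets
  simp only [Mset, Rset, Finset.mem_filter, Finset.mem_Icc, Finset.mem_image, Finset.mem_range]
  simp only [frag]
  constructor
  · rintro ⟨⟨hij, hjτ⟩, hj⟩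
    refine ⟨j - i, ⟨by omega, ?_⟩, by omega⟩
    rwa [show i + (j - i + 1) - 1 = j by omega]
  · rintro ⟨d, ⟨hdτ, hd⟩, rfl⟩
    refine ⟨⟨by omega, by omega⟩, ?_⟩
    rwa [show i + d - i + 1 = d + 1 by omega, ← show i + (d + 1) - 1 = i + d by omega]

theorem muExt_eq_frag (j : ℕ) :
    muExt n ℓ S i j = frag n S i ((j - 1) % rho n ℓ S i + 1) := by
  simp only [muExt, frag]
  congr 1

variable (h : ∀ j, 1 ≤ j → frag n T i' j = frag n S i j)
include h

theorem rho_congr : rho n ℓ T i' = rho n ℓ S i :=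
  per_congr fun j hj _ => h j hj

theorem muExt_congr : muExt n ℓ T i' = muExt n ℓ S i := by
  funext j
  rw [muExt_eq_frag, muExt_eq_frag, rho_congr h, h _ (Nat.le_add_left 1 _)]

theorem tau_congr : tau n ℓ k γ T i' = tau n ℓ k γ S i := by
  have hham (τ : ℕ) :
      hamIcc 1 τ (frag n T i') (muExt n ℓ T i') = hamIcc 1 τ (frag n S i) (muExt n ℓ S i) := by
    unfold hamIcc
    rw [muExt_congr h]
    exact congrArg card (filter_congr fun j hj => by rw [h j (mem_Icc.1 hj).1])
  simp only [tau, tauSet, hham]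

theorem mismatchOffsets_congr :
    mismatchOffsets n ℓ k γ T i' = mismatchOffsets n ℓ k γ S i := by
  simp only [mismatchOffsets, tau_congr h, muExt_congr h, h _ (Nat.le_add_left 1 _)]

end LocalData

section Marks

variable {n ℓ k : ℕ} {γ : ℝ} {S : ℕ → α} {i : ℕ}

def cubicMarks (n ℓ k : ℕ) (γ : ℝ) (S : ℕ → α) (i : ℕ) : Finset ℕ :=
  if rho n ℓ S i ≤ ℓ then (mismatchOffsets n ℓ k γ S i).image fun d => zwrap n (i + d : ℕ) else ∅

theorem fc_eq_biUnion_cubicMarks : fc n ℓ k γ S = (Icc 1 n).biUnion (cubicMarks n ℓ k γ S) := by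
  ext x
  simp only [fc, cubicSet, mem_biUnion, mem_filter, and_assoc]
  refine exists_congr fun i => and_congr_right fun hi => ?_
  rw [Mset_eq_image (mem_Icc.1 hi).1]
  unfold cubicMarks
  split_ifs <;> simp [*]

theorem cubicMarks_cyc (hn : 0 < n) (hi : 1 ≤ i) :
    cubicMarks n ℓ k γ (cyc n S) i = rotSet n (cubicMarks n ℓ k γ S (i + 1)) := by
  have hfrag : ∀ j, 1 ≤ j → frag n (cyc n S) i j = frag n S (i + 1) j :=
    fun _ hj => frag_cyc hi hj
  unfold cubicMarks
  rw [rho_congr hfrag, mismatchOffsets_congr hfrag, rotSet_eq_image]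
  split_ifs
  · rw [image_image]
    refine image_congr fun d _ => ?_
    have hd : ((i + 1 + d : ℕ) : ℤ) - 1 = ((i + d : ℕ) : ℤ) := by push_cast; ring
    exact zwrap_congr (hd ▸ (zwrap_modEq hn _).sub_right 1).symm
  · rfl

theorem cubicMarks_add_self (hi : 1 ≤ i) :
    cubicMarks n ℓ k γ S (i + n) = cubicMarks n ℓ k γ S i := by
  have hfrag : ∀ j, 1 ≤ j → frag n S (i + n) j = frag n S i j :=
    fun _ hj => frag_add_self hi hj
  unfold cubicMarks
  rw [rho_congr hfrag, mismatchOffsets_congr hfrag]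
  split_ifs
  · refine image_congr fun d _ => zwrap_congr ?_
    rw [show ((i + n + d : ℕ) : ℤ) = ((i + d : ℕ) : ℤ) + n by push_cast; ring]
    exact Int.add_modEq_right
  · rfl

end Marks

theorem stmt10_general {α : Type*} (n k ℓ : ℕ) (γ : ℝ) (S : ℕ → α) :
    fc n ℓ k γ (cyc n S) = rotSet n (fc n ℓ k γ S) := by
  rcases Nat.eq_zero_or_pos n with rfl | hn
  · simp [fc, cubicSet, rotSet]
  calc fc n ℓ k γ (cyc n S)
      = (Icc 1 n).biUnion fun i => rotSet n (cubicMarks n ℓ k γ S (i + 1)) := by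
        rw [fc_eq_biUnion_cubicMarks]
        exact biUnion_congr rfl fun i hi => cubicMarks_cyc hn (mem_Icc.1 hi).1
    _ = rotSet n ((Icc 1 n).biUnion fun i => cubicMarks n ℓ k γ S (i + 1)) := by
        simp only [rotSet_eq_image, biUnion_image]
    _ = rotSet n (fc n ℓ k γ S) := by
        rw [Finset.biUnion_Icc_one_comp_succ (by rw [add_comm]; exact cubicMarks_add_self le_rfl),
          fc_eq_biUnion_cubicMarks]

/-- For every `S ∈ Σ^n \ H_{n,k}`, `f_c(cyc(S)) = rot_n(f_c(S))`. -/
theorem stmt10 {α : Type*} (n k ℓ : ℕ) (γ : ℝ)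
    (hk1 : 1 ≤ k) (hkn : k ≤ n) (hγ : 14 ≤ γ) (hℓ1 : 1 ≤ ℓ)
    (hn : (n : ℝ) = 3 * γ * k * ℓ)
    (S : ℕ → α) (hS : ¬ PseudoPeriodic n (3 * γ * k) (γ * k) S) :
    fc n ℓ k γ (cyc n S) = rotSet n (fc n ℓ k γ S) :=
  stmt10_general n k ℓ γ S
end
end

section
/- Let S1, S2 ∈ Σ^n with Ham(S1,S2) ≤ k, and let S' be the string of length n over the extended alphabet Σ ⊔ {$_1,…,$_n} (where $_1,…,$_n are pairwise distinct symbols not in Σ) defined by S'[i] = S1[i] if S1[i] = S2[i] and S'[i] = $_i otherwise. If |P(S1)| ≥ n/2, then |P(S')| ≥ ((γ−2)/(2γ))·n, where P(S') is the set of cubic positions of S' over the extended alphabet. -/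
open Finset
open scoped Classical

noncomputable section

variable {α : Type*}

/-! A mismatch between `S1` and `S2` at position `d` can only affect the cubic positions `j` whose
window `S*[j..j+3ℓ-1]` covers `d`, and there are at most `3ℓ` of those. At every other cubic
position of `S1` the window of `S'` is an injective recoding of the window of `S1`, so it has the
same shortest period. Hence `|P(S')| ≥ |P(S1)| - 3kℓ ≥ n/2 - n/γ`. -/

lemma per_eq_of_eqOn_comp {A B : Type*} {L : ℕ} {w : ℕ → A} {w' : ℕ → B} {f : A → B}
    (hf : Function.Injective f) (h : ∀ m, 1 ≤ m → m ≤ L → w' m = f (w m)) :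
    per L w' = per L w := by
  suffices ∀ p, IsPeriod L w' p ↔ IsPeriod L w p by simp only [per, this]
  refine fun p => and_congr_right fun hp => forall₂_congr fun j hj => imp_congr_right fun hjp => ?_
  rw [h j hj (by omega), h (j + p) (by omega) hjp, hf.eq_iff]

lemma zwrap_sub_mul (n : ℕ) (x q : ℤ) : zwrap n (x - n * q) = zwrap n x := by
  rw [zwrap, zwrap, show x - n * q - 1 = x - 1 + n * -q by ring, Int.add_mul_emod_self_left]

lemma zwrap_of_mem_Icc {n j : ℕ} (hj : j ∈ Icc 1 n) : zwrap n j = j := by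
  rw [mem_Icc] at hj
  rw [zwrap, Int.emod_eq_of_lt (by omega) (by omega)]
  omega

def windowHits (n L : ℕ) (D : Finset ℕ) : Finset ℕ :=
  (Icc 1 n).filter fun j => ∃ t ∈ Icc j (j + L - 1), (t - 1) % n + 1 ∈ D

lemma card_windowHits_le (n L : ℕ) (D : Finset ℕ) : #(windowHits n L D) ≤ #D * L := by
  -- the window starting at `j` reads `d = (t-1) % n + 1` at offset `s = t - j + 1`, and `j ≡ d - s + 1`
  have hcover : windowHits n L D ⊆
      D.biUnion fun d => (Icc 1 L).image fun s : ℕ => zwrap n ((d : ℤ) - s + 1) := by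
    intro j hj
    obtain ⟨hj, t, ht, hd⟩ := mem_filter.mp hj
    refine mem_biUnion.mpr ⟨_, hd, mem_image.mpr ⟨t - j + 1, ?_, ?_⟩⟩
    · simp only [mem_Icc] at hj ht ⊢
      omega
    · rw [mem_Icc] at hj ht
      have hdiv := Nat.mod_add_div (t - 1) n
      have hwrap : (((t - 1) % n + 1 : ℕ) : ℤ) - ((t - j + 1 : ℕ) : ℤ) + 1
          = j - n * ((t - 1) / n : ℕ) := by
        zify [show 1 ≤ t by omega, show j ≤ t by omega] at hdiv ⊢
        linear_combination hdiv
      rw [hwrap, zwrap_sub_mul, zwrap_of_mem_Icc (mem_Icc.mpr hj)]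
  calc #(windowHits n L D)
      _ ≤ ∑ d ∈ D, #((Icc 1 L).image fun s : ℕ => zwrap n ((d : ℤ) - s + 1)) :=
        (card_le_card hcover).trans card_biUnion_le
      _ ≤ ∑ _d ∈ D, L := sum_le_sum fun d _ => card_image_le.trans (by simp)
      _ = #D * L := by rw [sum_const, smul_eq_mul]

lemma cubicSet_sdiff_windowHits_subset {A B : Type*} {n ℓ : ℕ} {S : ℕ → A} {S' : ℕ → B}
    {f : A → B} (hf : Function.Injective f) {D : Finset ℕ}
    (hS' : ∀ i ∈ Icc 1 n, i ∉ D → S' i = f (S i)) :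
    cubicSet n ℓ S \ windowHits n (3 * ℓ) D ⊆ cubicSet n ℓ S' := by
  intro j hj
  obtain ⟨hjP, hjD⟩ := mem_sdiff.mp hj
  obtain ⟨hj, hcubic⟩ := mem_filter.mp hjP
  refine mem_filter.mpr ⟨hj, ?_⟩
  have hn : 0 < n := by simp only [mem_Icc] at hj; omega
  suffices rho n ℓ S' j = rho n ℓ S j from this ▸ hcubic
  refine per_eq_of_eqOn_comp hf fun m hm hmL => hS' _ ?_ fun hd => hjD ?_
  · exact mem_Icc.mpr ⟨by omega, by have := Nat.mod_lt (j + m - 1 - 1) hn; omega⟩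
  · exact mem_filter.mpr ⟨hj, j + m - 1, mem_Icc.mpr ⟨by omega, by omega⟩, hd⟩

lemma card_cubicSet_le_add {A B : Type*} {n ℓ : ℕ} {S : ℕ → A} {S' : ℕ → B}
    {f : A → B} (hf : Function.Injective f) {D : Finset ℕ}
    (hS' : ∀ i ∈ Icc 1 n, i ∉ D → S' i = f (S i)) :
    #(cubicSet n ℓ S) ≤ #(cubicSet n ℓ S') + #D * (3 * ℓ) :=
  calc #(cubicSet n ℓ S)
      _ ≤ #(cubicSet n ℓ S \ windowHits n (3 * ℓ) D) + #(windowHits n (3 * ℓ) D) :=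
        card_le_card_sdiff_add_card
      _ ≤ #(cubicSet n ℓ S') + #D * (3 * ℓ) :=
        add_le_add (card_le_card (cubicSet_sdiff_windowHits_subset hf hS'))
          (card_windowHits_le n _ D)

theorem stmt13_general {α : Type*} (n k ℓ : ℕ) (γ : ℝ)
    (hγ : 14 ≤ γ)
    (hn : (n : ℝ) = 3 * γ * k * ℓ)
    (S1 S2 : ℕ → α) (hham : ham n S1 S2 ≤ k)
    (hP : (n : ℝ) / 2 ≤ ((cubicSet n ℓ S1).card : ℝ)) :
    ((γ - 2) / (2 * γ)) * (n : ℝ) ≤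
      ((cubicSet n ℓ (fun i =>
        if S1 i = S2 i then (Sum.inl (S1 i) : α ⊕ ℕ) else Sum.inr i)).card : ℝ) := by
  set S' : ℕ → α ⊕ ℕ := fun i => if S1 i = S2 i then Sum.inl (S1 i) else Sum.inr i
  set D := (Icc 1 n).filter fun i => S1 i ≠ S2 i
  have hcount : (#(cubicSet n ℓ S1) : ℝ) ≤ #(cubicSet n ℓ S') + #D * (3 * ℓ) := by
    exact_mod_cast card_cubicSet_le_add Sum.inl_injective
      fun i hi hiD => if_pos (not_not.mp fun h => hiD (mem_filter.mpr ⟨hi, h⟩))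
  have hD : (#D : ℝ) * (3 * ℓ) ≤ n / γ :=
    calc (#D : ℝ) * (3 * ℓ) ≤ k * (3 * ℓ) := by gcongr; exact_mod_cast hham
      _ = n / γ := by rw [hn]; field_simp
  calc ((γ - 2) / (2 * γ)) * (n : ℝ) = n / 2 - n / γ := by field_simp
    _ ≤ _ := by linarith

/-- Let `S'` (over the extended alphabet `Σ ⊔ {$_1,…,$_n}`) agree with `S1` where
`S1` and `S2` agree and carry a fresh symbol `$_i` elsewhere. If `Ham(S1,S2) ≤ k`
and `|P(S1)| ≥ n/2`, then `|P(S')| ≥ ((γ-2)/(2γ))·n`. -/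
theorem stmt13 {α : Type*} (n k ℓ : ℕ) (γ : ℝ)
    (hk1 : 1 ≤ k) (hkn : k ≤ n) (hγ : 14 ≤ γ) (hℓ1 : 1 ≤ ℓ)
    (hn : (n : ℝ) = 3 * γ * k * ℓ)
    (S1 S2 : ℕ → α) (hham : ham n S1 S2 ≤ k)
    (hP : (n : ℝ) / 2 ≤ ((cubicSet n ℓ S1).card : ℝ)) :
    ((γ - 2) / (2 * γ)) * (n : ℝ) ≤
      ((cubicSet n ℓ (fun i =>
        if S1 i = S2 i then (Sum.inl (S1 i) : α ⊕ ℕ) else Sum.inr i)).card : ℝ) :=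
  stmt13_general n k ℓ γ hγ hn S1 S2 hham hP
end
end

section
/- Let α be a positive real and β a nonnegative integer with ⌊α⌋ > 2β. If a string S ∈ Σ^n is (α,β)-pseudo-periodic, then its (α,β)-base is unique; that is, if S', S'' ∈ Σ^n both satisfy root(S') ≤ n/α, root(S'') ≤ n/α, Ham(S,S') ≤ β, and Ham(S,S'') ≤ β, then S' = S''. -/
open Finset
open scoped Classical

noncomputable section

variable {α : Type*}

/-!
Read both bases cyclically, as functions `f, g` on `ZMod n` with periods `p = root S'` and
`q = root S''`; they differ in at most `2b` places, fewer than the orbit sizes `n / p` and `n / q`.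
If `g x ≠ g (x + p)`, then every `y` in the `q`-orbit of `x` has a mismatch at `y` or at `y + p`
(as `f y = f (y + p)`), and these mismatches are distinct, so there would be at least `n / q` of
them. Hence `g` is `p`-periodic too, the mismatch set is a union of `p`-orbits, and it is empty.
-/

open Function

lemma card_image_add_nsmul_range {G : Type*} [AddLeftCancelMonoid G] [DecidableEq G] (x q : G) :
    ((range (addOrderOf q)).image fun k => x + k • q).card = addOrderOf q := by
  rw [card_image_of_injOn, card_range]
  intro k hk l hl hkl
  exact nsmul_injOn_Iio_addOrderOf (by simpa using hk) (by simpa using hl) (add_left_cancel hkl)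

namespace Function.Periodic

variable {G β : Type*} [AddCommGroup G] [Fintype G] {f g : G → β} {p q : G}

theorem eq_of_card_ne_lt (hf : Periodic f p) (hg : Periodic g p)
    (h : #{x | f x ≠ g x} < addOrderOf p) : f = g := by
  funext x
  by_contra hx
  refine h.not_ge ((card_image_add_nsmul_range x p).symm.trans_le (card_le_card ?_))
  simp only [subset_iff, mem_image, mem_filter, mem_univ, true_and]
  rintro _ ⟨k, -, rfl⟩
  rwa [hf.nsmul k x, hg.nsmul k x]

theorem periodic_of_card_ne_lt (hf : Periodic f p) (hg : Periodic g q)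
    (h : #{x | f x ≠ g x} < addOrderOf q) : Periodic g p := by
  intro x
  by_contra hx
  set C := (range (addOrderOf q)).image fun k => x + k • q
  have hgC : ∀ y ∈ C, g y = g x ∧ g (y + p) = g (x + p) := by
    simp only [C, mem_image]
    rintro _ ⟨k, -, rfl⟩
    exact ⟨hg.nsmul k x, by rw [add_right_comm]; exact hg.nsmul k (x + p)⟩
  refine h.not_ge ((card_image_add_nsmul_range x q).symm.trans_le
    (card_le_card_of_injOn (fun y => if f y ≠ g y then y else y + p) ?_ ?_))
  · intro y hy
    simp only [coe_filter, mem_univ, true_and, Set.mem_ofPred_eq]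
    split_ifs with hy'
    · exact hy'
    · rw [hf y, (hgC y hy).2, not_not.mp hy', (hgC y hy).1]
      exact fun e => hx e.symm
  · intro y hy z hz hyz
    simp only at hyz
    split_ifs at hyz
    · exact hyz
    · exact absurd ((hgC y hy).1.symm.trans (hyz ▸ (hgC z hz).2)) (fun e => hx e.symm)
    · exact absurd ((hgC z hz).1.symm.trans (hyz ▸ (hgC y hy).2)) (fun e => hx e.symm)
    · exact add_right_cancel hyz

end Function.Periodic

lemma IsPeriod.apply_add_mul {L p : ℕ} {w : ℕ → α} (h : IsPeriod L w p) (k : ℕ) {j : ℕ}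
    (hj : 1 ≤ j) (hjk : j + k * p ≤ L) : w (j + k * p) = w j := by
  induction k with
  | zero => simp
  | succ k ih =>
    rw [Nat.succ_mul, ← add_assoc, ← h.2 _ (by omega) (by linarith), ih (by linarith)]

lemma IsPeriod.apply_eq_of_modEq {L p : ℕ} {w : ℕ → α} (h : IsPeriod L w p) {i j : ℕ}
    (hi : 1 ≤ i) (hj : j ≤ L) (hij : i ≤ j) (hmod : i ≡ j [MOD p]) : w i = w j := by
  obtain ⟨k, hk⟩ := (Nat.modEq_iff_dvd' hij).mp hmod
  rw [show j = i + k * p by rw [mul_comm, ← hk]; omega]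
  exact (h.apply_add_mul k hi (by rw [mul_comm, ← hk]; omega)).symm

def zmodString (n : ℕ) (S : ℕ → α) : ZMod n → α := fun x => S (x.val + 1)

lemma IsPeriod.periodic_zmodString {n r : ℕ} [NeZero n] {S : ℕ → α} (h : IsPeriod n S r)
    (hr : r ∣ n) : Periodic (zmodString n S) (r : ZMod n) := by
  intro x
  have hmod : (x + r).val + 1 ≡ x.val + 1 [MOD r] := by
    rw [ZMod.val_add, ZMod.val_natCast]
    refine Nat.ModEq.add_right 1 ?_
    rw [Nat.ModEq, Nat.mod_mod_of_dvd _ hr, Nat.add_mod, Nat.mod_mod_of_dvd _ hr, Nat.mod_self,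
      add_zero, Nat.mod_mod]
  have hx := ZMod.val_lt x
  have hxr := ZMod.val_lt (x + (r : ZMod n))
  rcases le_total ((x + r).val) x.val with hle | hle
  · exact h.apply_eq_of_modEq (by omega) (by omega) (by omega) hmod
  · exact (h.apply_eq_of_modEq (by omega) (by omega) (by omega) hmod.symm).symm

lemma hamIcc_le_add (a b : ℕ) (S T U : ℕ → α) :
    hamIcc a b T U ≤ hamIcc a b S T + hamIcc a b S U := by
  refine (card_le_card fun j => ?_).trans (card_union_le _ _)
  simp only [mem_filter, mem_union]
  grind

lemma ham_eq_card_zmodString {n : ℕ} [NeZero n] (S T : ℕ → α) :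
    ham n S T = #{x | zmodString n S x ≠ zmodString n T x} := by
  unfold ham hamIcc zmodString
  refine card_nbij' (fun j => ((j - 1 : ℕ) : ZMod n)) (fun x => x.val + 1) ?_ ?_ ?_ ?_
  · intro j hj
    simp only [coe_filter, mem_Icc, mem_univ, true_and, Set.mem_ofPred_eq] at hj ⊢
    rw [ZMod.val_natCast, Nat.mod_eq_of_lt (by omega), Nat.sub_add_cancel hj.1.1]
    exact hj.2
  · intro x hx
    simp only [coe_filter, mem_Icc, mem_univ, true_and, Set.mem_ofPred_eq] at hx ⊢
    exact ⟨⟨by omega, ZMod.val_lt x⟩, hx⟩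
  · intro j hj
    simp only [coe_filter, mem_Icc, Set.mem_ofPred_eq] at hj
    simp only [ZMod.val_natCast, Nat.mod_eq_of_lt (show j - 1 < n by omega)]
    omega
  · intro x _
    simp

lemma root_spec {n : ℕ} (hn : n ≠ 0) (S : ℕ → α) : root n S ∣ n ∧ IsPeriod n S (root n S) :=
  Nat.sInf_mem (s := {r | r ∣ n ∧ IsPeriod n S r})
    ⟨n, dvd_rfl, Nat.pos_of_ne_zero hn, fun _ _ _ => by omega⟩

lemma addOrderOf_natCast_of_dvd {n r : ℕ} (hn : n ≠ 0) (hr : r ∣ n) :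
    addOrderOf (r : ZMod n) = n / r := by
  rw [ZMod.addOrderOf_coe r hn, Nat.gcd_eq_right hr]

lemma two_mul_lt_div_of_le_div {n r b : ℕ} {a : ℝ} (hab : 2 * (b : ℤ) < ⌊a⌋) (hr : 0 < r)
    (h : (r : ℝ) ≤ n / a) : 2 * b < n / r := by
  have ha : (2 * b + 1 : ℝ) ≤ a := by
    have : ((2 * b + 1 : ℤ) : ℝ) ≤ ⌊a⌋ := by exact_mod_cast hab
    push_cast at this
    linarith [Int.floor_le a]
  have hra : (r : ℝ) * a ≤ n := (le_div_iff₀ (by linarith)).mp h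
  refine Nat.lt_of_lt_of_le (Nat.lt_succ_self _) ((Nat.le_div_iff_mul_le hr).mpr ?_)
  exact_mod_cast (by nlinarith : (2 * b + 1 : ℝ) * r ≤ n)

theorem stmt15_general {α : Type*} (n : ℕ) (a : ℝ) (b : ℕ)
    (hab : 2 * (b : ℤ) < ⌊a⌋)
    (S S' S'' : ℕ → α)
    (h1 : (root n S' : ℝ) ≤ (n : ℝ) / a) (h2 : ham n S S' ≤ b)
    (h3 : (root n S'' : ℝ) ≤ (n : ℝ) / a) (h4 : ham n S S'' ≤ b) :
    ∀ i ∈ Finset.Icc 1 n, S' i = S'' i := by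
  intro i hi
  rw [mem_Icc] at hi
  have hn : n ≠ 0 := by omega
  have : NeZero n := ⟨hn⟩
  have hper : ∀ T : ℕ → α, (root n T : ℝ) ≤ n / a →
      Periodic (zmodString n T) (root n T : ZMod n) ∧ 2 * b < addOrderOf (root n T : ZMod n) := by
    intro T hT
    obtain ⟨hdvd, hT'⟩ := root_spec hn T
    rw [addOrderOf_natCast_of_dvd hn hdvd]
    exact ⟨hT'.periodic_zmodString hdvd, two_mul_lt_div_of_le_div hab hT'.1 hT⟩
  obtain ⟨hp', hord'⟩ := hper S' h1
  obtain ⟨hp'', hord''⟩ := hper S'' h3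
  have hD : #{x | zmodString n S' x ≠ zmodString n S'' x} ≤ 2 * b := by
    rw [← ham_eq_card_zmodString]
    exact (hamIcc_le_add 1 n S S' S'').trans (two_mul b ▸ add_le_add h2 h4)
  have hS : zmodString n S' = zmodString n S'' :=
    hp'.eq_of_card_ne_lt (hp'.periodic_of_card_ne_lt hp'' (by omega)) (by omega)
  simpa [zmodString, Nat.mod_eq_of_lt (show i - 1 < n by omega), Nat.sub_add_cancel hi.1]
    using congrFun hS (i - 1 : ℕ)

/-- If `⌊a⌋ > 2b`, then the `(a,b)`-base of an `(a,b)`-pseudo-periodic string is unique. -/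
theorem stmt15 {α : Type*} (n : ℕ) (a : ℝ) (ha : 0 < a) (b : ℕ)
    (hab : 2 * (b : ℤ) < ⌊a⌋)
    (S S' S'' : ℕ → α)
    (h1 : (root n S' : ℝ) ≤ (n : ℝ) / a) (h2 : ham n S S' ≤ b)
    (h3 : (root n S'' : ℝ) ≤ (n : ℝ) / a) (h4 : ham n S S'' ≤ b) :
    ∀ i ∈ Finset.Icc 1 n, S' i = S'' i :=
  stmt15_general n a b hab S S' S'' h1 h2 h3 h4
end
end

section
/- Assume additionally that 4k·ln n ≤ n. Let h : Σ^{3ℓ} → {0,1} be a random function whose values h(u), for u ∈ Σ^{3ℓ}, are independent with Pr[h(u) = 1] = 4k·ln n / n (i.e., h is distributed according to the product of Bernoulli(4k·ln n/n) variables indexed by Σ^{3ℓ}). For S ∈ Σ^n define f_n(S) = {i ∈ N(S) : h(S*[i..i+3ℓ−1]) = 1}. Then for every fixed S ∈ Σ^n, Pr[|f_n(S)| ≥ 8k·ln n] ≤ n^{−4/(9γ)}. -/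
open Finset
open scoped Classical

noncomputable section

variable {α : Type*}

/-!
Group the non-cubic positions `i` by their window `S*[i..i+3ℓ-1]`. Two non-cubic positions
with the same window are more than `ℓ` apart, since otherwise their distance would be a period
`≤ ℓ` of that window; so each window `v` occurs at most `c_v ≤ n/ℓ + 1 = 3γk + 1` times, and
`|f_n(S)| = ∑_v c_v h(v)` is a weighted sum of independent Bernoulli(`p`) variables with
`∑_v c_v ≤ n`. The Chernoff bound at `t = ln 2 / (3γk + 1)`, together with `exp y ≤ 1 + y / ln 2`
on `[0, ln 2]`, bounds the tail by `exp ((pn - 8k ln 2 ln n) / (3γk + 1))`, and `pn = 4k ln n`.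
-/

open MeasureTheory ProbabilityTheory Real

set_option linter.deprecated false

lemma exp_le_one_add_div_log_two {y : ℝ} (h0 : 0 ≤ y) (h1 : y ≤ log 2) :
    exp y ≤ 1 + y / log 2 := by
  have hL : 0 < log 2 := log_pos one_lt_two
  have hθ : y / log 2 ≤ 1 := (div_le_one hL).mpr h1
  have hchord := convexOn_exp.2 (Set.mem_univ 0) (Set.mem_univ (log 2))
    (sub_nonneg.mpr hθ) (div_nonneg h0 hL.le) (sub_add_cancel 1 (y / log 2))
  simp only [smul_eq_mul, mul_zero, zero_add, exp_zero, mul_one, exp_log two_pos,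
    div_mul_cancel₀ y hL.ne'] at hchord
  linarith

lemma mul_exp_add_one_sub_le {p y : ℝ} (hp : 0 ≤ p) (h0 : 0 ≤ y) (h1 : y ≤ log 2) :
    p * exp y + (1 - p) ≤ exp (p * y / log 2) :=
  calc p * exp y + (1 - p) ≤ p * (1 + y / log 2) + (1 - p) := by
        gcongr; exact exp_le_one_add_div_log_two h0 h1
    _ = p * y / log 2 + 1 := by ring
    _ ≤ exp (p * y / log 2) := add_one_le_exp _

section BernoulliProduct

variable {I : Type*} [Fintype I] (p : NNReal) (hp : p ≤ 1)

lemma mgf_sum_ite_pi_bernoulli (c : I → ℝ) (t : ℝ) :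
    mgf (fun h : I → Bool => ∑ v, if h v then c v else 0)
        (Measure.pi fun _ => (PMF.bernoulli p hp).toMeasure) t
      = ∏ v, (p * exp (t * c v) + (1 - p)) := by
  have hprod : ∀ h : I → Bool, exp (t * ∑ v, if h v then c v else 0)
      = ∏ v, exp (t * if h v then c v else 0) := fun h => by
    rw [Finset.mul_sum, exp_sum]
  simp only [mgf, hprod]
  rw [integral_fintype_prod_eq_prod (fun v (b : Bool) => exp (t * if b then c v else 0))]
  refine Finset.prod_congr rfl fun v _ => ?_
  rw [PMF.integral_eq_sum, Fintype.sum_bool]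
  simp [PMF.bernoulli_apply, ENNReal.toReal_sub_of_le (ENNReal.coe_le_one_iff.mpr hp)]

theorem pi_bernoulli_sum_ite_ge_le_exp {c : I → ℝ} {C : ℝ} (hC : 0 < C)
    (hc : ∀ v, c v ∈ Set.Icc 0 C) (a : ℝ) :
    Measure.pi (fun _ => (PMF.bernoulli p hp).toMeasure)
        {h : I → Bool | a ≤ ∑ v, if h v then c v else 0}
      ≤ ENNReal.ofReal (exp ((p * ∑ v, c v - log 2 * a) / C)) := by
  -- `t = log 2 / C` keeps every `t * c v` in `[0, log 2]`, where `exp` lies below its chord.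
  set t := log 2 / C with ht_def
  have ht : 0 ≤ t := div_nonneg (log_pos one_lt_two).le hC.le
  have h1p : (0 : ℝ) ≤ 1 - p := sub_nonneg.mpr (NNReal.coe_le_one.mpr hp)
  have hfactor : ∀ v, p * exp (t * c v) + (1 - p) ≤ exp (p * c v / C) := fun v => by
    have hy : t * c v ≤ log 2 := by
      calc t * c v ≤ t * C := mul_le_mul_of_nonneg_left (hc v).2 ht
        _ = log 2 := div_mul_cancel₀ _ hC.ne'
    refine (mul_exp_add_one_sub_le p.coe_nonneg (mul_nonneg ht (hc v).1) hy).trans_eq ?_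
    rw [ht_def]
    field_simp
  rw [← ofReal_measureReal]
  gcongr
  calc _ ≤ exp (-t * a) * mgf (fun h : I → Bool => ∑ v, if h v then c v else 0)
          (Measure.pi fun _ => (PMF.bernoulli p hp).toMeasure) t :=
        measure_ge_le_exp_mul_mgf a ht Integrable.of_finite
    _ ≤ exp (-t * a) * ∏ v, exp (p * c v / C) := by
        rw [mgf_sum_ite_pi_bernoulli]
        gcongr with v
        exact hfactor v
    _ = exp ((p * ∑ v, c v - log 2 * a) / C) := by
        rw [← exp_sum, ← exp_add]
        congr 1
        simp only [ht_def, Finset.mul_sum, ← Finset.sum_div]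
        ring

end BernoulliProduct

lemma Finset.card_le_of_forall_lt_sub {T : Finset ℕ} {N ℓ : ℕ} (hT : T ⊆ range N)
    (hgap : ∀ i ∈ T, ∀ j ∈ T, i < j → ℓ < j - i) : #T ≤ (N + ℓ) / (ℓ + 1) := by
  have hblock : ∀ a b, a + (ℓ + 1) ≤ b → a / (ℓ + 1) < b / (ℓ + 1) := fun a b hab => by
    have := Nat.div_le_div_right (c := ℓ + 1) hab
    rw [Nat.add_div_right a ℓ.add_one_pos] at this
    omega
  rw [← card_range ((N + ℓ) / (ℓ + 1))]
  refine card_le_card_of_injOn (· / (ℓ + 1)) (fun i hi => ?_) (fun i hi j hj hij => ?_)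
  · have := mem_range.mp (hT hi)
    exact mem_range.mpr (hblock i (N + ℓ) (by omega))
  · by_contra hne
    rcases Nat.lt_or_gt_of_ne hne with h | h
    · exact (hblock i j (by have := hgap i hi j hj h; omega)).ne hij
    · exact (hblock j i (by have := hgap j hj i hi h; omega)).ne hij.symm

lemma card_filter_comp_eq_sum_ite {ι β : Type*} [Fintype β] [DecidableEq β] (s : Finset ι)
    (u : ι → β) (h : β → Bool) :
    (#(s.filter fun i => h (u i) = true) : ℝ)
      = ∑ v, if h v then (#(s.filter fun i => u i = v) : ℝ) else 0 := by
  rw [card_eq_sum_card_fiberwise (f := u) (t := univ) fun _ _ => mem_univ _]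
  push_cast
  refine sum_congr rfl fun v _ => ?_
  rw [filter_filter]
  split_ifs with hv
  · exact congrArg (fun t : Finset ι => (#t : ℝ)) (filter_congr fun i _ => by grind)
  · simp only [Nat.cast_eq_zero, card_eq_zero, filter_eq_empty_iff]
    grind

def nonCubicSet (n ℓ : ℕ) (S : ℕ → α) : Finset ℕ :=
  (Icc 1 n).filter fun i => ℓ < rho n ℓ S i

def window (n ℓ : ℕ) (S : ℕ → α) (i : ℕ) : Fin (3 * ℓ) → α := fun j => frag n S i (j.1 + 1)

lemma rho_le_sub_of_window_eq {n ℓ i j : ℕ} {S : ℕ → α} (hij : i < j)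
    (h : window n ℓ S i = window n ℓ S j) : rho n ℓ S i ≤ j - i := by
  refine Nat.sInf_le ⟨by omega, fun m hm hmL => ?_⟩
  have hshift : frag n S i (m + (j - i)) = frag n S j m := by
    unfold frag; congr 1; omega
  have hwin := congrFun h ⟨m - 1, by omega⟩
  simp only [window, Nat.sub_add_cancel hm] at hwin
  rw [hshift, hwin]

lemma card_nonCubicSet_window_fiber_le {n ℓ : ℕ} (hℓ : 0 < ℓ) (S : ℕ → α)
    (v : Fin (3 * ℓ) → α) :
    (#((nonCubicSet n ℓ S).filter fun i => window n ℓ S i = v) : ℝ) ≤ n / ℓ + 1 := by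
  have hsub : (nonCubicSet n ℓ S).filter (fun i => window n ℓ S i = v) ⊆ range (n + 1) :=
    fun i hi => by simp only [nonCubicSet, mem_filter, mem_Icc] at hi; simp; omega
  have hcard := card_le_of_forall_lt_sub (ℓ := ℓ) hsub fun i hi j hj hij => by
    simp only [nonCubicSet, mem_filter] at hi hj
    have := rho_le_sub_of_window_eq hij (hi.2.trans hj.2.symm)
    omega
  calc (#((nonCubicSet n ℓ S).filter fun i => window n ℓ S i = v) : ℝ)
      ≤ ((n + 1 + ℓ) / (ℓ + 1) : ℕ) := by exact_mod_cast hcard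
    _ ≤ ((n + 1 + ℓ : ℕ) : ℝ) / (ℓ + 1 : ℕ) := Nat.cast_div_le
    _ = n / (ℓ + 1) + 1 := by push_cast; field_simp; ring
    _ ≤ n / ℓ + 1 := by gcongr; linarith

lemma coe_toNNReal_div_mul_le {x y s : ℝ} (hx : 0 ≤ x) (hy : 0 < y) (hs : s ≤ y) :
    ((x / y).toNNReal : ℝ) * s ≤ x :=
  calc ((x / y).toNNReal : ℝ) * s ≤ x / y * y := by
        rw [Real.coe_toNNReal _ (by positivity)]; gcongr
    _ = x := div_mul_cancel₀ x hy.ne'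

lemma tail_exponent_le {γ k L : ℝ} (hγ : 0 < γ) (hγk : 14 ≤ γ * k) (hL : 0 ≤ L) :
    (4 * k * L - log 2 * (8 * k * L)) / (3 * γ * k + 1) ≤ L * -(4 / (9 * γ)) := by
  have hcoeff : k * (4 - 8 * log 2) / (3 * γ * k + 1) ≤ -4 / (9 * γ) := by
    rw [div_le_div_iff₀ (by linarith) (by linarith)]
    nlinarith [log_two_gt_d9]
  calc (4 * k * L - log 2 * (8 * k * L)) / (3 * γ * k + 1)
      = L * (k * (4 - 8 * log 2) / (3 * γ * k + 1)) := by ring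
    _ ≤ L * -(4 / (9 * γ)) := by rw [← neg_div]; gcongr

open MeasureTheory in
/-- Assume `4k·ln n ≤ n`. Let `h : Σ^{3ℓ} → {0,1}` be a random function with values
independent Bernoulli(`4k·ln n / n`), and let
`f_n(S) = {i ∈ N(S) : h(S*[i..i+3ℓ-1]) = 1}` (where `N(S)` is the set of non-cubic
positions). Then for every fixed `S ∈ Σ^n`, `Pr[|f_n(S)| ≥ 8k·ln n] ≤ n^(-4/(9γ))`. -/
theorem stmt17 {α : Type*} [Fintype α] (n k ℓ : ℕ) (γ : ℝ)
    (hk1 : 1 ≤ k) (hkn : k ≤ n) (hγ : 14 ≤ γ) (hℓ1 : 1 ≤ ℓ)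
    (hn : (n : ℝ) = 3 * γ * k * ℓ)
    (hlog : 4 * (k : ℝ) * Real.log n ≤ (n : ℝ))
    (S : ℕ → α) :
    Measure.pi (fun _ : Fin (3 * ℓ) → α =>
        (PMF.bernoulli (Real.toNNReal (4 * (k : ℝ) * Real.log n / (n : ℝ)))
          (by
            have hn0 : (0 : ℝ) < (n : ℝ) := by
              have h1 : (1 : ℕ) ≤ n := hk1.trans hkn
              exact_mod_cast Nat.lt_of_lt_of_le Nat.zero_lt_one h1
            calc Real.toNNReal (4 * (k : ℝ) * Real.log n / (n : ℝ))
                ≤ Real.toNNReal 1 :=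
                  Real.toNNReal_le_toNNReal ((div_le_one hn0).mpr hlog)
              _ = 1 := Real.toNNReal_one)).toMeasure)
      {h : (Fin (3 * ℓ) → α) → Bool |
        8 * (k : ℝ) * Real.log n ≤
          (((Finset.Icc 1 n).filter fun i =>
              ℓ < rho n ℓ S i ∧ h (fun j => frag n S i (j.1 + 1)) = true).card : ℝ)} ≤
      ENNReal.ofReal ((n : ℝ) ^ (-(4 / (9 * γ)))) := by
  have hk : (1 : ℝ) ≤ k := by exact_mod_cast hk1
  have hℓ : (1 : ℝ) ≤ ℓ := by exact_mod_cast hℓ1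
  have hγk : 14 ≤ γ * k := by nlinarith
  have hn1 : 1 < (n : ℝ) := by
    rw [hn]; nlinarith [mul_le_mul_of_nonneg_left hℓ (by linarith : 0 ≤ 3 * γ * k)]
  set c : (Fin (3 * ℓ) → α) → ℝ :=
    fun v => #((nonCubicSet n ℓ S).filter fun i => window n ℓ S i = v)
  have hc : ∀ v, c v ∈ Set.Icc 0 (3 * γ * k + 1) := fun v => by
    refine ⟨Nat.cast_nonneg _, (card_nonCubicSet_window_fiber_le hℓ1 S v).trans_eq ?_⟩
    rw [hn]; field_simp
  have hsum : ∑ v, c v ≤ n := by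
    simp only [c, ← Nat.cast_sum, ← card_eq_sum_card_fiberwise fun _ _ => mem_univ _]
    exact_mod_cast (card_filter_le _ _).trans (Nat.card_Icc 1 n).le
  refine (measure_mono fun h hh => ?_).trans
    ((pi_bernoulli_sum_ite_ge_le_exp _ _ (by positivity) hc (8 * k * log n)).trans ?_)
  · rw [Set.mem_setOf_eq, ← filter_filter] at hh
    exact hh.trans_eq (card_filter_comp_eq_sum_ite (nonCubicSet n ℓ S) (window n ℓ S) h)
  rw [rpow_def_of_pos (by linarith)]
  refine ENNReal.ofReal_le_ofReal (exp_le_exp.mpr ?_)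
  have hlogn : 0 ≤ log n := log_nonneg hn1.le
  have hmean := coe_toNNReal_div_mul_le (x := 4 * k * log n) (by positivity) (by linarith) hsum
  calc _ ≤ (4 * k * log n - log 2 * (8 * k * log n)) / (3 * γ * k + 1) :=
        div_le_div_of_nonneg_right (sub_le_sub_right hmean _) (by positivity)
    _ ≤ log n * -(4 / (9 * γ)) := tail_exponent_le (by linarith) hγk hlogn
end
end
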